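/- arXiv:1009.5526 — 11 statements merged into one kernel-verified Lean document; each statement's English description precedes it below -/
import Mathlib

section
/- If G is a finite group, then Pr(G) ≥ (1/|G'|)(1 + (|G'| - 1)/|G : Z(G)|). In particular, Pr(G) > 1/|G'| if G is non-abelian. -/
/-!
Since `Pr(G) = k(G) / |G|` with `k(G)` the number of conjugacy classes, it suffices to count
classes. The class of `x` lies in the coset `x G'`, so every class has at most `|G'|` elements,
and the `|Z(G)|` central classes are singletons. The class equation then gives
`|G| ≤ |Z(G)| + (k(G) - |Z(G)|) |G'|`, which rearranges to the bound using `|G| = |Z(G)| |G : Z(G)|`.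
The bound exceeds `1 / |G'|` as soon as `G' ≠ 1`, i.e. as soon as `G` is non-abelian.
-/

noncomputable def commDeg (G : Type*) [Group G] : ℚ :=
  (Nat.card {p : G × G // p.1 * p.2 = p.2 * p.1} : ℚ) / (Nat.card G) ^ 2

section

open Subgroup ConjClasses
open scoped commutatorElement

variable {G : Type*} [Group G] [Finite G]

theorem ConjClasses.card_carrier_le_card_commutator (c : ConjClasses G) :
    Nat.card c.carrier ≤ Nat.card (commutator G) := by
  obtain ⟨x, rfl⟩ := c.exists_rep
  refine Nat.card_le_card_of_injective (fun y => ⟨x⁻¹ * y, ?_⟩) fun a b h => ?_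
  · obtain ⟨y, hy⟩ := y
    rw [mem_carrier_iff_mk_eq, eq_comm, mk_eq_mk_iff_isConj, isConj_iff] at hy
    obtain ⟨g, rfl⟩ := hy
    rw [show x⁻¹ * (g * x * g⁻¹) = ⁅x⁻¹, g⁆ by group]
    exact commutator_mem_commutator (mem_top _) (mem_top _)
  · simpa [Subtype.ext_iff] using h

variable (G)

theorem ConjClasses.card_noncenter_add_card_center :
    Nat.card (noncenter G) + Nat.card (center G) = Nat.card (ConjClasses G) := by
  rw [show Nat.card (center G) = Nat.card ((noncenter G)ᶜ : Set _) from
    Nat.card_congr ((mk_bijOn G).equiv _)]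
  exact Set.ncard_add_ncard_compl _

theorem card_le_card_center_add_card_noncenter_mul :
    Nat.card G ≤ Nat.card (center G) + Nat.card (noncenter G) * Nat.card (commutator G) := by
  rw [← Group.nat_card_center_add_sum_card_noncenter_eq_card G,
    finsum_mem_eq_finite_toFinset_sum _ (Set.toFinite _)]
  gcongr
  calc _ ≤ _ := Finset.sum_le_card_nsmul _ _ _ fun c _ => card_carrier_le_card_commutator c
    _ = _ := by rw [smul_eq_mul, ← Set.ncard_eq_toFinset_card]; rfl

theorem inv_card_commutator_mul_le_commProb :
    1 / (Nat.card (commutator G) : ℚ) * (1 + (Nat.card (commutator G) - 1) / (center G).index)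
      ≤ commProb G := by
  have hn : (Nat.card G : ℚ) = Nat.card (center G) * (center G).index :=
    mod_cast (card_mul_index (center G)).symm
  have hk : (Nat.card (noncenter G) + Nat.card (center G) : ℚ) = Nat.card (ConjClasses G) :=
    mod_cast card_noncenter_add_card_center G
  have hG : (Nat.card G : ℚ) ≤
      Nat.card (center G) + Nat.card (noncenter G) * Nat.card (commutator G) :=
    mod_cast card_le_card_center_add_card_noncenter_mul G
  have hm : (0 : ℚ) < Nat.card (commutator G) := Nat.cast_pos.mpr Nat.card_pos
  have hz : (0 : ℚ) < Nat.card (center G) := Nat.cast_pos.mpr Nat.card_pos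
  have hi : (0 : ℚ) < (center G).index :=
    Nat.cast_pos.mpr (Nat.pos_of_ne_zero index_ne_zero_of_finite)
  rw [commProb_def']
  set n : ℚ := (Nat.card G : ℚ)
  set z : ℚ := (Nat.card (center G) : ℚ)
  set m : ℚ := (Nat.card (commutator G) : ℚ)
  set i : ℚ := ((center G).index : ℚ)
  calc 1 / m * (1 + (m - 1) / i) = (n + z * (m - 1)) / (m * n) := by rw [hn]; field_simp
    _ ≤ Nat.card (ConjClasses G) * m / (m * n) := by gcongr; rw [← hk]; linarith
    _ = Nat.card (ConjClasses G) / n := by field_simp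

theorem inv_card_commutator_lt_commProb (h : ¬IsMulCommutative G) :
    1 / (Nat.card (commutator G) : ℚ) < commProb G := by
  have hm : (1 : ℚ) < Nat.card (commutator G) :=
    mod_cast (one_lt_card_iff_ne_bot _).mpr (mt (commutator_eq_bot_iff G).mp h)
  have hi : (0 : ℚ) < (center G).index :=
    Nat.cast_pos.mpr (Nat.pos_of_ne_zero index_ne_zero_of_finite)
  have hd : (0 : ℚ) < (Nat.card (commutator G) - 1) / (center G).index :=
    div_pos (by linarith) hi
  exact (lt_mul_of_one_lt_right (by positivity) (by linarith)).trans_le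
    (inv_card_commutator_mul_le_commProb G)

end

theorem commDeg_lower_bound (G : Type*) [Group G] [Fintype G] :
    commDeg G ≥ (1 / (Nat.card (commutator G) : ℚ)) *
        (1 + ((Nat.card (commutator G) : ℚ) - 1) / ((Subgroup.center G).index : ℚ)) ∧
      (¬ (∀ a b : G, a * b = b * a) → commDeg G > 1 / (Nat.card (commutator G) : ℚ)) :=
  -- `commDeg G` is `commProb G` by definition, since `Commute a b` unfolds to `a * b = b * a`.
  ⟨inv_card_commutator_mul_le_commProb G, fun h =>
    inv_card_commutator_lt_commProb G (by intro; exact h fun a b => mul_comm' a b)⟩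
end

section
/- Let G be a finite non-abelian group. Then Pr(G) = (1/|G'|)(1 + (|G'|-1)/|G : Z(G)|) if and only if |Cl_G(x)| = |G'| for all x ∈ G − Z(G), where Cl_G(x) is the conjugacy class of x in G. -/
section

variable {G : Type*} [Group G]

theorem card_setOf_conj_eq_index_centralizer (x : G) :
    Nat.card {z : G | ∃ g : G, g * x * g⁻¹ = z} = (Subgroup.centralizer {x}).index := by
  have : {z : G | ∃ g : G, g * x * g⁻¹ = z} = MulAction.orbit (ConjAct G) x := by
    ext z
    simp only [Set.mem_ofPred_eq, MulAction.mem_orbit_iff, ConjAct.smul_def]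
    exact (ConjAct.toConjAct (G := G)).surjective.exists
  rw [this, Nat.card_coe_set_eq, ← MulAction.index_stabilizer,
    Subgroup.centralizer_eq_comap_stabilizer]
  exact (Subgroup.index_comap_of_surjective _ ConjAct.toConjAct.surjective).symm

theorem index_centralizer_eq_one_iff {x : G} :
    (Subgroup.centralizer {x}).index = 1 ↔ x ∈ Subgroup.center G := by
  rw [Subgroup.index_eq_one, Subgroup.centralizer_eq_top_iff_subset, Set.singleton_subset_iff,
    SetLike.mem_coe]

theorem index_centralizer_le_card_commutator [Finite (commutator G)] (x : G) :
    (Subgroup.centralizer {x}).index ≤ Nat.card (commutator G) := by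
  have hsub : commutatorSet G ⊆ commutator G := commutator_eq_closure G ▸ Subgroup.subset_closure
  have : Finite (commutatorSet G) := (Set.toFinite (commutator G : Set G)).subset hsub
  calc (Subgroup.centralizer {x}).index
      ≤ Nat.card (commutatorSet G) :=
        Nat.card_le_card_of_injective _ (Subgroup.quotientCentralizerEmbedding x).injective
    _ ≤ Nat.card (commutator G) := Set.ncard_le_ncard hsub

theorem card_commute_eq_sum_card_centralizer [Fintype G] :
    Nat.card {p : G × G // p.1 * p.2 = p.2 * p.1}
      = ∑ x : G, Nat.card (Subgroup.centralizer {x}) := by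
  rw [Nat.card_congr (Equiv.subtypeProdEquivSigmaSubtype fun a b : G => a * b = b * a),
    Nat.card_sigma]
  refine Finset.sum_congr rfl fun x _ => Nat.card_congr (Equiv.subtypeEquivRight fun y => ?_)
  rw [Subgroup.mem_centralizer_singleton_iff, eq_comm]

theorem commDeg_eq_sum_inv_index_centralizer [Fintype G] :
    commDeg G = (∑ x : G, ((Subgroup.centralizer {x}).index : ℚ)⁻¹) / Nat.card G := by
  rw [commDeg, card_commute_eq_sum_card_centralizer, Nat.cast_sum, Finset.sum_div,
    Finset.sum_div]
  refine Finset.sum_congr rfl fun x _ => ?_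
  have hcard : (Nat.card (Subgroup.centralizer {x}) : ℚ) * (Subgroup.centralizer {x}).index
      = Nat.card G := mod_cast (Subgroup.centralizer {x}).card_mul_index
  have hindex : ((Subgroup.centralizer {x}).index : ℚ) ≠ 0 :=
    Nat.cast_ne_zero.2 (Subgroup.centralizer {x}).index_ne_zero_of_finite
  rw [← hcard]
  field_simp

theorem sum_ite_mem_center_div_card [Fintype G] [DecidablePred (· ∈ Subgroup.center G)]
    (c : ℚ) (hc : c ≠ 0) :
    (∑ x : G, if x ∈ Subgroup.center G then 1 else c⁻¹) / Nat.card G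
      = (1 / c) * (1 + (c - 1) / (Subgroup.center G).index) := by
  have hcard : (Nat.card (Subgroup.center G) : ℚ) * (Subgroup.center G).index = Nat.card G :=
    mod_cast (Subgroup.center G).card_mul_index
  have hindex : ((Subgroup.center G).index : ℚ) ≠ 0 :=
    Nat.cast_ne_zero.2 (Subgroup.center G).index_ne_zero_of_finite
  have hz : (Finset.univ.filter (· ∈ Subgroup.center G)).card = Nat.card (Subgroup.center G) := by
    rw [← Fintype.card_subtype, ← Nat.card_eq_fintype_card]
  have hnz : ((Finset.univ.filter (· ∉ Subgroup.center G)).card : ℚ)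
      = Nat.card G - Nat.card (Subgroup.center G) := by
    rw [eq_sub_iff_add_eq', ← hz, Nat.card_eq_fintype_card, ← Finset.card_univ]
    exact_mod_cast Finset.card_filter_add_card_filter_not _
  rw [Finset.sum_ite, Finset.sum_const, Finset.sum_const, nsmul_eq_mul, nsmul_eq_mul, mul_one, hz,
    hnz, ← hcard]
  field_simp
  ring

end

theorem commDeg_eq_lower_bound_iff_general (G : Type*) [Group G] [Fintype G] :
    commDeg G = (1 / (Nat.card (commutator G) : ℚ)) *
        (1 + ((Nat.card (commutator G) : ℚ) - 1) / ((Subgroup.center G).index : ℚ)) ↔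
      ∀ x : G, x ∉ Subgroup.center G →
        Nat.card {z : G | ∃ g : G, g * x * g⁻¹ = z} = Nat.card (commutator G) := by
  classical
  set m := Nat.card (commutator G)
  have hm : (m : ℚ) ≠ 0 := Nat.cast_ne_zero.2 Nat.card_pos.ne'
  have hn : (Nat.card G : ℚ) ≠ 0 := Nat.cast_ne_zero.2 Nat.card_pos.ne'
  have hle : ∀ x ∈ Finset.univ, (if x ∈ Subgroup.center G then 1 else (m : ℚ)⁻¹)
      ≤ ((Subgroup.centralizer {x}).index : ℚ)⁻¹ := by
    intro x _
    split_ifs with hx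
    · rw [index_centralizer_eq_one_iff.2 hx, Nat.cast_one, inv_one]
    · exact inv_anti₀ (Nat.cast_pos.2 (Nat.pos_of_ne_zero Subgroup.index_ne_zero_of_finite))
        (Nat.cast_le.2 (index_centralizer_le_card_commutator x))
  rw [commDeg_eq_sum_inv_index_centralizer, ← sum_ite_mem_center_div_card _ hm,
    div_left_inj' hn, eq_comm, Finset.sum_eq_sum_iff_of_le hle]
  refine forall_congr' fun x => ?_
  by_cases hx : x ∈ Subgroup.center G
  · refine iff_of_true (fun _ => ?_) (absurd hx)
    rw [if_pos hx, index_centralizer_eq_one_iff.2 hx, Nat.cast_one, inv_one]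
  · rw [if_neg hx, card_setOf_conj_eq_index_centralizer, inv_inj, Nat.cast_inj, eq_comm]
    exact ⟨fun h _ => h (Finset.mem_univ x), fun h _ => h hx⟩

theorem commDeg_eq_lower_bound_iff (G : Type*) [Group G] [Fintype G]
    (hG : ¬ (∀ a b : G, a * b = b * a)) :
    commDeg G = (1 / (Nat.card (commutator G) : ℚ)) *
        (1 + ((Nat.card (commutator G) : ℚ) - 1) / ((Subgroup.center G).index : ℚ)) ↔
      ∀ x : G, x ∉ Subgroup.center G →
        Nat.card {z : G | ∃ g : G, g * x * g⁻¹ = z} = Nat.card (commutator G) :=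
  commDeg_eq_lower_bound_iff_general G
end

section
/- Let G be a finite non-abelian group such that Cl_G(x) = G'x for all x ∈ G − Z(G). Then every element of G' is a commutator; indeed G' = {[y,x] : y ∈ G} for every x ∈ G − Z(G). -/
theorem commutator_eq_commutators_of_classes_eq_cosets (G : Type*) [Group G] [Fintype G]
    (hG : ¬ (∀ a b : G, a * b = b * a))
    (h : ∀ x : G, x ∉ Subgroup.center G →
      {z : G | ∃ g : G, g * x * g⁻¹ = z} = {z : G | ∃ c ∈ commutator G, z = c * x}) :
    ∀ x : G, x ∉ Subgroup.center G →
      (commutator G : Set G) = {c : G | ∃ y : G, c = y * x * y⁻¹ * x⁻¹} := by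
  intro x hx
  ext c
  constructor
  · intro hc
    have : (c * x) ∈ {z : G | ∃ g : G, g * x * g⁻¹ = z} := by
      rw [h x hx]; exact ⟨c, hc, rfl⟩
    obtain ⟨g, hg⟩ := this
    exact ⟨g, by rw [hg]; group⟩
  · rintro ⟨y, rfl⟩
    have := Subgroup.commutator_mem_commutator (Subgroup.mem_top y) (Subgroup.mem_top x)
    simpa [commutator, commutatorElement_def, mul_assoc] using this
end

section
/- If G is a finite group with Pr(G) = 1/3, then |G| is even. -/
theorem even_card_of_commDeg_eq_third (G : Type*) [Group G] [Fintype G]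
    (h : commDeg G = 1 / 3) :
    Even (Nat.card G) := by
  classical
  by_contra hodd
  rw [Nat.not_even_iff_odd] at hodd
  set n := Nat.card G with hn
  set N := Nat.card {p : G × G // p.1 * p.2 = p.2 * p.1} with hNdef
  have hnpos : 0 < n := Nat.card_pos
  -- 3 * N = n ^ 2
  have key : 3 * N = n ^ 2 := by
    have hq : (N : ℚ) / (n : ℚ) ^ 2 = 1 / 3 := h
    have hn0 : ((n : ℚ) ^ 2) ≠ 0 := by positivity
    field_simp at hq
    have : ((3 * N : ℕ) : ℚ) = ((n ^ 2 : ℕ) : ℚ) := by push_cast; linarith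
    exact_mod_cast this
  -- N as a sum of centralizer cardinalities
  set c : G → ℕ := fun x => Fintype.card {y : G // x * y = y * x} with hc
  have hN : N = ∑ x : G, c x := by
    rw [hNdef, Nat.card_eq_fintype_card,
      Fintype.card_congr (Equiv.subtypeProdEquivSigmaSubtype fun x y : G => x * y = y * x),
      Fintype.card_sigma]
  -- each centralizer has odd cardinality
  have hoddc : ∀ x : G, Odd (c x) := by
    intro x
    have hcx : c x = Nat.card (Subgroup.centralizer ({x} : Set G)) := by
      rw [hc, Nat.card_eq_fintype_card]
      apply Fintype.card_congr
      apply Equiv.subtypeEquivRight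
      intro y
      rw [Subgroup.mem_centralizer_singleton_iff]
      exact eq_comm
    rw [hcx]
    exact hodd.of_dvd_nat (Subgroup.card_subgroup_dvd_card _)
  -- c x = c x⁻¹
  have hcinv : ∀ x : G, c x⁻¹ = c x := by
    intro x
    apply Fintype.card_congr
    apply Equiv.subtypeEquivRight
    intro y
    constructor
    · intro hy
      have : Commute x⁻¹ y := (commute_iff_eq _ _).mpr hy
      exact (commute_iff_eq _ _).mp (Commute.inv_left_iff.mp this)
    · intro hy
      have : Commute x y := (commute_iff_eq _ _).mpr hy
      exact (commute_iff_eq _ _).mp this.inv_left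
  -- no element of order 2
  have hinv_ne : ∀ x : G, x ≠ 1 → x⁻¹ ≠ x := by
    intro x hx1 hinv
    have hsq : x * x = 1 := by
      nth_rewrite 1 [← hinv]
      exact inv_mul_cancel x
    have h2 : orderOf x ∣ 2 := orderOf_dvd_of_pow_eq_one (by simpa [pow_two] using hsq)
    have hdvdn : orderOf x ∣ n := by
      rw [hn, Nat.card_eq_fintype_card]; exact orderOf_dvd_card
    have := hodd.of_dvd_nat hdvdn
    have hle := Nat.le_of_dvd (by norm_num) h2
    have hpos := orderOf_pos x
    have h1 : orderOf x = 1 := by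
      rw [Nat.odd_iff] at this
      omega
    exact hx1 (orderOf_eq_one_iff.mp h1)
  -- sum over non-identity elements vanishes mod 4
  have hsum0 : ∑ x ∈ (Finset.univ.erase (1 : G)), ((c x : ZMod 4) - 1) = 0 := by
    apply Finset.sum_involution (fun a _ => a⁻¹)
    · intro a ha
      obtain ⟨m, hm⟩ := hoddc a
      rw [hcinv a, hm]
      have h4 : (4 : ZMod 4) = 0 := rfl
      push_cast
      linear_combination (m : ZMod 4) * h4
    · intro a ha _
      exact hinv_ne a (Finset.ne_of_mem_erase ha)
    · intro a ha
      exact inv_inv a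
    · intro a ha
      simp only [Finset.mem_erase, Finset.mem_univ, and_true, ne_eq, inv_eq_one]
      exact Finset.ne_of_mem_erase ha
  have hsum1 : ∑ x ∈ (Finset.univ.erase (1 : G)), (c x : ZMod 4) = (n : ZMod 4) - 1 := by
    rw [Finset.sum_sub_distrib, Finset.sum_const, Finset.card_erase_of_mem (Finset.mem_univ _),
      Finset.card_univ, nsmul_eq_mul, mul_one] at hsum0
    have hcard : ((Fintype.card G - 1 : ℕ) : ZMod 4) = (n : ZMod 4) - 1 := by
      rw [Nat.cast_sub (by rw [hn, Nat.card_eq_fintype_card] at hnpos; omega)]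
      simp [hn, Nat.card_eq_fintype_card]
    rw [hcard] at hsum0
    linear_combination hsum0
  have hc1 : c 1 = n := by
    rw [hn, Nat.card_eq_fintype_card, hc]
    simp only [one_mul, mul_one]
    exact Fintype.card_congr (Equiv.subtypeUnivEquiv fun _ => trivial)
  have htot : (N : ZMod 4) = 2 * (n : ZMod 4) - 1 := by
    rw [hN]
    push_cast
    rw [← Finset.sum_erase_add _ _ (Finset.mem_univ (1 : G)), hsum1, hc1]
    ring
  have hfin : ((3 * N : ℕ) : ZMod 4) = ((n ^ 2 : ℕ) : ZMod 4) := by rw [key]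
  obtain ⟨t, ht⟩ := hodd
  push_cast at hfin
  rw [htot, ht] at hfin
  push_cast at hfin
  have h4 : (4 : ZMod 4) = 0 := rfl
  have h2 : (2 : ZMod 4) = 0 := by
    linear_combination hfin + ((t : ZMod 4) ^ 2 - 2 * t) * h4
  exact absurd h2 (by decide)
end

section
/- For every positive integer n, there exists a finite group G such that Pr(G) = 1/n. -/
lemma commDeg_eq_commProb (G : Type*) [Group G] : commDeg G = commProb G := rfl

theorem exists_group_commDeg_eq_inv (n : ℕ) (hn : 0 < n) :
    ∃ (G : Type) (_ : Group G) (_ : Fintype G), commDeg G = 1 / (n : ℚ) := by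
  have h := DihedralGroup.commProb_reciprocal n
  have hfin : Finite (DihedralGroup.Product (DihedralGroup.reciprocalFactors n)) := by
    by_contra hinf
    rw [not_finite_iff_infinite] at hinf
    rw [commProb_eq_zero_of_infinite] at h
    have : (n : ℚ) ≠ 0 := by positivity
    simp [eq_comm, this] at h
  exact ⟨DihedralGroup.Product (DihedralGroup.reciprocalFactors n), inferInstance,
    Fintype.ofFinite _, by rw [commDeg_eq_commProb]; exact h⟩
end

section
/- Let G be a finite group and let Pr₁ⁿ(G) = |{(g₁,…,g_n) ∈ Gⁿ : g₁g₂⋯g_n g₁⁻¹g₂⁻¹⋯g_n⁻¹ = 1}|/|G|ⁿ for n ≥ 2. Then Pr₁ⁿ(G) ≥ (n·|G:Z(G)| − n + 1)/|G:Z(G)|ⁿ, and Pr₁ⁿ(G) = 1 if and only if G is abelian. -/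
/-- The probability that a random `n`-tuple `(g₁, …, gₙ)` of elements of `G` satisfies
`g₁ g₂ ⋯ gₙ g₁⁻¹ g₂⁻¹ ⋯ gₙ⁻¹ = g`. -/
noncomputable def prWord (G : Type*) [Group G] (n : ℕ) (g : G) : ℚ :=
  (Nat.card {t : Fin n → G // (List.ofFn t).prod * (List.ofFn fun i => (t i)⁻¹).prod = g} : ℚ) / (Nat.card G) ^ n

/-!
If all entries of a tuple but at most one are central, the entries pairwise commute and the word
`g₁ ⋯ gₙ g₁⁻¹ ⋯ gₙ⁻¹` evaluates to `1`. With `z = |Z(G)|` there are `zⁿ` such tuples with all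
entries central and `n (|G| - z) zⁿ⁻¹` with exactly one entry outside `Z(G)`; dividing by
`|G|ⁿ = |G:Z(G)|ⁿ zⁿ` gives the bound. Conversely, if every tuple is a solution, the tuple
`(a, b, 1, …, 1)` shows that `a b a⁻¹ b⁻¹ = 1`.
-/

open Finset Function
open scoped commutatorElement

section Counting

variable {ι α : Type*} [Fintype ι] [DecidableEq ι] [Fintype α] [DecidableEq α]

theorem card_piFinset_update_compl (s : Finset α) (i : ι) :
    #(Fintype.piFinset (update (fun _ => s) i sᶜ)) = #sᶜ * #s ^ (Fintype.card ι - 1) := by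
  have hcard : (fun j => #(update (fun _ => s) i sᶜ j)) = update (fun _ => #s) i #sᶜ := by
    ext j; by_cases hj : j = i <;> simp [hj]
  rw [Fintype.card_piFinset, hcard, prod_update_of_mem (mem_univ i), prod_const,
    card_sdiff_of_subset (subset_univ _), card_univ, card_singleton]

theorem pow_add_mul_le_card_filter_subsingleton_notMem (s : Finset α) :
    #s ^ Fintype.card ι + Fintype.card ι * (#sᶜ * #s ^ (Fintype.card ι - 1)) ≤
      #{t : ι → α | {i | t i ∉ s}.Subsingleton} := by
  set B : ι → Finset (ι → α) := fun i => Fintype.piFinset (update (fun _ => s) i sᶜ)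
  have hB : ∀ i, ∀ t ∈ B i, ∀ j, t j ∉ s ↔ j = i := fun i t ht j => by
    by_cases hj : j = i <;> simpa [hj] using Fintype.mem_piFinset.1 ht j
  have hdisj : Disjoint (Fintype.piFinset fun _ => s) (univ.biUnion B) := by
    simp only [disjoint_left, mem_biUnion, Fintype.mem_piFinset]
    rintro t hs ⟨i, -, hi⟩
    exact (hB i t hi i).2 rfl (hs i)
  have hpair : ((univ : Finset ι) : Set ι).PairwiseDisjoint B := by
    intro i _ j _ hij
    exact disjoint_left.2 fun t hi hj => hij ((hB j t hj i).1 ((hB i t hi i).2 rfl))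
  calc _ = #((Fintype.piFinset fun _ => s) ∪ univ.biUnion B) := by
        rw [card_union_of_disjoint hdisj, card_biUnion hpair, Fintype.card_piFinset, prod_const,
          card_univ]
        simp only [B, card_piFinset_update_compl, sum_const, card_univ, smul_eq_mul]
    _ ≤ _ := by
      refine card_le_card fun t ht => mem_filter.2 ⟨mem_univ t, ?_⟩
      rcases mem_union.1 ht with hs | hi
      · exact fun j hj => absurd (Fintype.mem_piFinset.1 hs j) hj
      · obtain ⟨i, -, hi⟩ := mem_biUnion.1 hi
        exact fun j hj k hk => ((hB i t hi j).1 hj).trans ((hB i t hi k).1 hk).symm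

end Counting

theorem pow_add_mul_div_mul_pow_eq {z : ℚ} (hz : z ≠ 0) (c : ℚ) (n : ℕ) :
    (z ^ n + n * ((c * z - z) * z ^ (n - 1))) / (c * z) ^ n = (n * c - n + 1) / c ^ n := by
  rcases n with _ | n
  · simp
  · have hnum : z ^ (n + 1) + ↑(n + 1) * ((c * z - z) * z ^ (n + 1 - 1)) =
        (↑(n + 1) * c - ↑(n + 1) + 1) * z ^ (n + 1) := by
      rw [Nat.add_sub_cancel]; ring
    rw [hnum, mul_pow, mul_div_mul_right _ _ (pow_ne_zero _ hz)]

section CommWord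

variable {G : Type*} [Group G]

def commWord {n : ℕ} (t : Fin n → G) : G := (List.ofFn t).prod * (List.ofFn fun i => (t i)⁻¹).prod

theorem commWord_eq_one_of_commute {n : ℕ} (t : Fin n → G) (h : ∀ i j, Commute (t i) (t j)) :
    commWord t = 1 := by
  have hc : (List.ofFn fun i => (t i)⁻¹).Pairwise Commute :=
    List.pairwise_ofFn.2 fun i j _ => (h i j).inv_inv
  rw [commWord, mul_eq_one_iff_inv_eq, List.prod_inv_reverse, List.map_ofFn]
  exact ((List.reverse_perm _).symm.prod_eq' hc).symm

theorem commWord_eq_one_of_subsingleton_notMem_center {n : ℕ} (t : Fin n → G)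
    (h : {i | t i ∉ Subgroup.center G}.Subsingleton) : commWord t = 1 := by
  refine commWord_eq_one_of_commute t fun j k => ?_
  by_cases hj : t j ∈ Subgroup.center G
  · exact (Subgroup.mem_center_iff.1 hj (t k)).symm
  by_cases hk : t k ∈ Subgroup.center G
  · exact Subgroup.mem_center_iff.1 hk (t j)
  rw [h hj hk]

theorem commWord_cons_cons_one {m : ℕ} (a b : G) :
    commWord (Fin.cons a (Fin.cons b 1) : Fin (m + 2) → G) = ⁅a, b⁆ := by
  simp [commWord, commutatorElement_def, mul_assoc]

theorem prWord_eq_card_filter [Fintype G] [DecidableEq G] (n : ℕ) (g : G) :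
    prWord G n g = #{t : Fin n → G | commWord t = g} / (Fintype.card G : ℚ) ^ n := by
  rw [prWord, Nat.card_eq_fintype_card, Fintype.card_subtype, Nat.card_eq_fintype_card]
  rfl

theorem prWord_eq_one_iff [Fintype G] (n : ℕ) (g : G) :
    prWord G n g = 1 ↔ ∀ t : Fin n → G, commWord t = g := by
  classical
  have hcard : Fintype.card (Fin n → G) = Fintype.card G ^ n := by simp
  rw [prWord_eq_card_filter, div_eq_one_iff_eq (by positivity), ← Nat.cast_pow, Nat.cast_inj,
    ← hcard, card_eq_iff_eq_univ, filter_eq_self]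
  simp

theorem prWord_one_eq_one_iff [Fintype G] {n : ℕ} (hn : 2 ≤ n) :
    prWord G n 1 = 1 ↔ ∀ a b : G, a * b = b * a := by
  obtain ⟨m, rfl⟩ := Nat.exists_eq_add_of_le' hn
  rw [prWord_eq_one_iff]
  refine ⟨fun h a b => ?_, fun h t => commWord_eq_one_of_commute t fun i j => h _ _⟩
  rw [← commutatorElement_eq_one_iff_mul_comm, ← commWord_cons_cons_one (m := m)]
  exact h _

theorem prWord_one_ge [Fintype G] (n : ℕ) :
    ((n : ℚ) * (Subgroup.center G).index - n + 1) / ((Subgroup.center G).index : ℚ) ^ n ≤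
      prWord G n 1 := by
  classical
  set Z : Finset G := {g | g ∈ Subgroup.center G}
  have hZ : (#Z : ℚ) ≠ 0 := by exact_mod_cast (card_pos.2 ⟨1, by simp [Z]⟩).ne'
  have hN : (Fintype.card G : ℚ) = (Subgroup.center G).index * #Z := by
    rw [← Nat.card_eq_fintype_card, ← (Subgroup.center G).index_mul_card, Nat.card_eq_fintype_card,
      Fintype.card_subtype]
    push_cast; rfl
  have hZc : (#Zᶜ : ℚ) = Fintype.card G - #Z := by
    rw [card_compl, Nat.cast_sub (card_le_univ Z)]
  have hcount : #Z ^ n + n * (#Zᶜ * #Z ^ (n - 1)) ≤ #{t : Fin n → G | commWord t = 1} := by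
    have h := pow_add_mul_le_card_filter_subsingleton_notMem (ι := Fin n) Z
    rw [Fintype.card_fin] at h
    refine h.trans (card_le_card fun t ht => ?_)
    simp only [mem_filter, mem_univ, true_and, Z] at ht ⊢
    exact commWord_eq_one_of_subsingleton_notMem_center t ht
  rw [prWord_eq_card_filter, ← pow_add_mul_div_mul_pow_eq hZ, ← hN, ← hZc]
  gcongr
  exact_mod_cast hcount

end CommWord

theorem prWord_one_bound (G : Type*) [Group G] [Fintype G] (n : ℕ) (hn : 2 ≤ n) :
    prWord G n 1 ≥ ((n : ℚ) * ((Subgroup.center G).index : ℚ) - n + 1) /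
        ((Subgroup.center G).index : ℚ) ^ n ∧
      (prWord G n 1 = 1 ↔ ∀ a b : G, a * b = b * a) :=
  ⟨prWord_one_ge n, prWord_one_eq_one_iff hn⟩
end

section
/- Let G be a finite group, g ∈ G', and for n ≥ 2 let Pr_gⁿ(G) = |{(g₁,…,g_n) ∈ Gⁿ : g₁⋯g_n g₁⁻¹⋯g_n⁻¹ = g}|/|G|ⁿ. Then Pr_gⁿ(G) ≤ Pr₁ⁿ(G), with equality if and only if g = 1. -/
/-!
Write `N_n(g)` for the number of solutions of `x₁⋯xₙ x₁⁻¹⋯xₙ⁻¹ = g`. For tuples of even length the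
pair `(x₁⋯xₙ, x₁⁻¹⋯xₙ⁻¹)` is equidistributed with its conjugates, in each coordinate separately.
Peeling off one or two letters therefore gives `N_{2j+1} = |G| N_{2j}` and
`N_{2j+2}(g) = ∑ₕ N_{2j}(h) K(h⁻¹g)`, where `K(u)` counts the pairs with commutator `u`. So the
matrix `(N_{2m}(a⁻¹b))_{a,b}` is the `m`-th power of `M = (K(a⁻¹b))_{a,b}`.

`M` is positive semidefinite: `K(a⁻¹b) = ∑_z μ(za, zb)` with `μ(c, d) = #{x | xcx⁻¹ = d}`, and
`|G| μ = μᵀμ`. The quadratic form of `Mᵐ` at `e₁ - e_g` equals `2(N_{2m}(1) - N_{2m}(g)) ≥ 0`. If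
it vanishes, then `Mᵐ(e₁ - e_g) = 0`, hence `M(e₁ - e_g) = 0`, i.e. `K(g) = K(1)`; but
`K(g) < K(1)` for `g ≠ 1`, since `μ(z, zg) ≤ μ(z, z)` with strict inequality at `z = 1`.
-/

open Finset Matrix
open scoped commutatorElement

namespace Matrix

variable {n R : Type*} [Fintype n] [DecidableEq n]

lemma IsHermitian.mulVec_eq_zero_of_pow_mulVec_eq_zero [Ring R] [PartialOrder R] [StarRing R]
    [StarOrderedRing R] [NoZeroDivisors R] {A : Matrix n n R} (hA : A.IsHermitian) {v : n → R}
    {k : ℕ} (h : A ^ (k + 1) *ᵥ v = 0) : A *ᵥ v = 0 := by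
  induction k with
  | zero => simpa using h
  | succ k ih =>
    refine ih ?_
    rw [pow_succ', ← mulVec_mulVec, ← conjTranspose_mul_self_mulVec_eq_zero, hA.eq, mulVec_mulVec,
      ← pow_two, ← pow_add, add_comm, h]

lemma single_sub_single_dotProduct_mulVec [CommRing R] (A : Matrix n n R) (i j : n) :
    (Pi.single i 1 - Pi.single j 1) ⬝ᵥ A *ᵥ (Pi.single i 1 - Pi.single j 1) =
      A i i - A i j - A j i + A j j := by
  simp only [mulVec_sub, mulVec_single_one, sub_dotProduct, dotProduct_sub, single_one_dotProduct,
    col_apply]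
  ring

end Matrix

section

variable {G : Type*} [Group G]

def tupleProd {n : ℕ} (t : Fin n → G) : G := (List.ofFn t).prod

@[simp]
lemma tupleProd_cons {n : ℕ} (x : G) (t : Fin n → G) :
    tupleProd (Fin.cons x t : Fin (n + 1) → G) = x * tupleProd t := by
  simp [tupleProd, List.ofFn_succ]

@[simp]
lemma tupleProd_inv_cons {n : ℕ} (x : G) (t : Fin n → G) :
    tupleProd (Fin.cons x t : Fin (n + 1) → G)⁻¹ = x⁻¹ * tupleProd t⁻¹ := by
  rw [tupleProd, List.ofFn_succ, List.prod_cons]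
  rfl

@[simp]
lemma tupleProd_fin_zero (t : Fin 0 → G) : tupleProd t = 1 := by
  simp [tupleProd]

lemma Fintype.sum_fin_succ_pi {α M : Type*} [Fintype α] [AddCommMonoid M] {n : ℕ}
    (f : (Fin (n + 1) → α) → M) : ∑ t, f t = ∑ x, ∑ s, f (Fin.cons x s) := by
  rw [← (Fin.consEquiv fun _ => α).sum_comp, Fintype.sum_prod_type]
  rfl

section Sums

variable [Fintype G] {M : Type*} [AddCommMonoid M]

lemma sum_tupleProd_inv_tupleProd (n : ℕ) (F : G → G → M) :
    ∑ s : Fin n → G, F (tupleProd s⁻¹) (tupleProd s) =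
      ∑ s : Fin n → G, F (tupleProd s) (tupleProd s⁻¹) :=
  Fintype.sum_bijective _ inv_bijective _ _ fun s => by rw [inv_inv]

lemma sum_conj_tupleProd (u : G) (j : ℕ) (F : G → G → M) :
    ∑ s : Fin (2 * j) → G, F (u * tupleProd s * u⁻¹) (tupleProd s⁻¹) =
      ∑ s : Fin (2 * j) → G, F (tupleProd s) (tupleProd s⁻¹) := by
  induction j generalizing F with
  | zero => simp
  | succ j ih =>
    simp only [Nat.mul_succ, Fintype.sum_fin_succ_pi, tupleProd_cons, tupleProd_inv_cons]
    -- `(x, y) ↦ (u x, y u⁻¹)` conjugates `x y` by `u` and fixes `x⁻¹ y⁻¹`.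
    calc _ = ∑ x, ∑ y, ∑ s : Fin (2 * j) → G,
          F (x * (y * (u * tupleProd s * u⁻¹))) (x⁻¹ * (y⁻¹ * tupleProd s⁻¹)) :=
          Fintype.sum_bijective (u * ·) (Group.mulLeft_bijective u) _ _ fun x =>
            Fintype.sum_bijective (· * u⁻¹) (Group.mulRight_bijective u⁻¹) _ _ fun y =>
              sum_congr rfl fun s _ => by congr 1 <;> group
      _ = _ := sum_congr rfl fun x _ => sum_congr rfl fun y _ =>
        ih fun A B => F (x * (y * A)) (x⁻¹ * (y⁻¹ * B))

lemma sum_conj_tupleProd_conj_tupleProd_inv (u v : G) (j : ℕ) (F : G → G → M) :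
    ∑ s : Fin (2 * j) → G, F (u * tupleProd s * u⁻¹) (v * tupleProd s⁻¹ * v⁻¹) =
      ∑ s : Fin (2 * j) → G, F (tupleProd s) (tupleProd s⁻¹) :=
  (sum_tupleProd_inv_tupleProd _ fun A B => F (u * B * u⁻¹) (v * A * v⁻¹)).trans <|
    (sum_conj_tupleProd v j fun A B => F (u * B * u⁻¹) A).trans <|
    (sum_tupleProd_inv_tupleProd _ fun A B => F (u * A * u⁻¹) B).trans (sum_conj_tupleProd u j F)

end Sums

section Counting

variable [Fintype G] [DecidableEq G]

def wordCount (n : ℕ) (g : G) : ℕ := #{t : Fin n → G | tupleProd t * tupleProd t⁻¹ = g}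

def commCount (g : G) : ℕ := #{p : G × G | ⁅p.1, p.2⁆ = g}

def conjCount (c d : G) : ℕ := #{x : G | x * c * x⁻¹ = d}

lemma wordCount_zero (g : G) : wordCount 0 g = if g = 1 then 1 else 0 := by
  simp only [wordCount, tupleProd_fin_zero, mul_one, eq_comm (a := (1 : G))]
  split_ifs <;> simp [*]

lemma wordCount_two_mul_add_one (j : ℕ) (g : G) :
    wordCount (2 * j + 1) g = Fintype.card G * wordCount (2 * j) g := by
  simp only [wordCount, card_filter, Fintype.sum_fin_succ_pi, tupleProd_cons, tupleProd_inv_cons]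
  trans ∑ _x : G, ∑ s : Fin (2 * j) → G, if tupleProd s * tupleProd s⁻¹ = g then 1 else 0
  · refine sum_congr rfl fun x _ => ?_
    refine (sum_conj_tupleProd x⁻¹ j fun A B => if x * A * (x⁻¹ * B) = g then 1 else 0).symm.trans
      (sum_congr rfl fun s _ => ?_)
    congr 2
    group
  · simp

lemma wordCount_two_mul_add_two (j : ℕ) (g : G) :
    wordCount (2 * j + 2) g = ∑ h, wordCount (2 * j) h * commCount (h⁻¹ * g) := by
  have hstep (x y : G) :
      (∑ s : Fin (2 * j) → G,
        if x * (y * tupleProd s) * (x⁻¹ * (y⁻¹ * tupleProd s⁻¹)) = g then 1 else 0) =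
      ∑ s : Fin (2 * j) → G, if tupleProd s * tupleProd s⁻¹ * ⁅x, y⁆ = g then 1 else 0 := by
    -- Conjugating the two products by `(x y)⁻¹` and `⁅x, y⁆⁻¹` moves the commutator to the end.
    refine (sum_conj_tupleProd_conj_tupleProd_inv (x * y)⁻¹ ⁅x, y⁆⁻¹ j fun A B =>
      if x * (y * A) * (x⁻¹ * (y⁻¹ * B)) = g then 1 else 0).symm.trans
      (sum_congr rfl fun s _ => ?_)
    simp only [commutatorElement_def]
    congr 2
    group
  simp only [wordCount, commCount, card_filter, Fintype.sum_fin_succ_pi, tupleProd_cons,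
    tupleProd_inv_cons, hstep, sum_mul, ite_mul, one_mul, zero_mul]
  conv_rhs => rw [sum_comm]
  simp only [sum_ite_eq, mem_univ, if_true, eq_inv_mul_iff_mul_eq]
  rw [← Fintype.sum_prod_type' (fun x y => ∑ s : Fin (2 * j) → G,
    if tupleProd s * tupleProd s⁻¹ * ⁅x, y⁆ = g then 1 else 0), sum_comm]

lemma sum_conjCount_mul_conjCount (c d : G) :
    ∑ y, conjCount y c * conjCount y d = Fintype.card G * conjCount c d := by
  calc ∑ y, conjCount y c * conjCount y d
      = ∑ x : G, ∑ x' : G, if x' * (x⁻¹ * c * x) * x'⁻¹ = d then 1 else 0 := by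
        simp only [conjCount, card_filter, sum_mul_sum, ite_mul, one_mul, zero_mul]
        rw [sum_comm]
        refine sum_congr rfl fun x _ => ?_
        rw [sum_comm]
        refine sum_congr rfl fun x' _ => ?_
        rw [Fintype.sum_eq_single (x⁻¹ * c * x) fun y hy => if_neg fun h => hy (by rw [← h]; group),
          if_pos (by group)]
    _ = ∑ _x : G, ∑ u : G, if u * c * u⁻¹ = d then 1 else 0 :=
        sum_congr rfl fun x _ => Fintype.sum_bijective (· * x⁻¹) (Group.mulRight_bijective x⁻¹)
          _ _ fun x' => by congr 2; group
    _ = Fintype.card G * conjCount c d := by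
        rw [sum_const, card_univ, smul_eq_mul, conjCount, card_filter]

lemma commCount_inv_mul_eq_sum_conjCount (a b : G) :
    commCount (a⁻¹ * b) = ∑ z, conjCount (z * a) (z * b) := by
  simp only [commCount, conjCount, card_filter, Fintype.sum_prod_type]
  refine Fintype.sum_bijective (fun y => y⁻¹ * a⁻¹)
    ((Equiv.inv G).trans (Equiv.mulRight a⁻¹)).bijective _ _ fun y => sum_congr rfl fun x _ => ?_
  congr 1
  rw [commutatorElement_def, ← mul_right_inj y⁻¹]
  congr 1 <;> group

lemma conjCount_le_conjCount_self (c d : G) : conjCount c d ≤ conjCount c c := by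
  by_cases h : ∃ x₀, x₀ * c * x₀⁻¹ = d
  · obtain ⟨x₀, rfl⟩ := h
    refine card_le_card_of_injOn (x₀⁻¹ * ·) (fun x hx => ?_) (mul_right_injective x₀⁻¹).injOn
    simp only [coe_filter, mem_univ, true_and, Set.mem_ofPred_eq] at hx ⊢
    calc x₀⁻¹ * x * c * (x₀⁻¹ * x)⁻¹ = x₀⁻¹ * (x * c * x⁻¹) * x₀ := by group
      _ = c := by rw [hx]; group
  · simp only [not_exists] at h
    simp [conjCount, h]

lemma commCount_lt_commCount_one {g : G} (hg : g ≠ 1) : commCount g < commCount (1 : G) := by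
  have hg' := commCount_inv_mul_eq_sum_conjCount (1 : G) g
  have h1 := commCount_inv_mul_eq_sum_conjCount (1 : G) 1
  simp only [inv_one, one_mul, mul_one] at hg' h1
  rw [hg', h1]
  refine sum_lt_sum (fun z _ => conjCount_le_conjCount_self z (z * g)) ⟨1, mem_univ _, ?_⟩
  simp [conjCount, Ne.symm hg, Fintype.card_pos]

lemma prWord_eq_wordCount_div (n : ℕ) (g : G) :
    prWord G n g = wordCount n g / (Fintype.card G : ℚ) ^ n := by
  rw [prWord, Nat.card_eq_fintype_card, Nat.card_eq_fintype_card, Fintype.card_subtype]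
  rfl

end Counting

section Positivity

variable [Fintype G] [DecidableEq G]

def convMatrix (f : G → ℕ) : Matrix G G ℝ := of fun a b => (f (a⁻¹ * b) : ℝ)

def conjMatrix : Matrix G G ℝ := of fun c d => (conjCount c d : ℝ)

lemma posSemidef_conjMatrix : (conjMatrix : Matrix G G ℝ).PosSemidef := by
  have h : (conjMatrix : Matrix G G ℝ) = (Fintype.card G : ℝ)⁻¹ • (conjMatrixᴴ * conjMatrix) := by
    ext c d
    simp only [conjMatrix, Matrix.smul_apply, mul_apply, conjTranspose_apply, of_apply,
      star_trivial, smul_eq_mul, ← Nat.cast_mul, ← Nat.cast_sum, sum_conjCount_mul_conjCount]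
    push_cast
    field_simp
  rw [h]
  exact (posSemidef_conjTranspose_mul_self _).smul (by positivity)

lemma convMatrix_commCount_eq_sum :
    convMatrix commCount = ∑ z : G, (conjMatrix : Matrix G G ℝ).submatrix (z * ·) (z * ·) := by
  ext a b
  simp [convMatrix, conjMatrix, commCount_inv_mul_eq_sum_conjCount, Matrix.sum_apply]

lemma posSemidef_convMatrix_commCount : (convMatrix commCount : Matrix G G ℝ).PosSemidef := by
  rw [convMatrix_commCount_eq_sum]
  exact posSemidef_sum _ fun z _ => posSemidef_conjMatrix.submatrix _

lemma convMatrix_wordCount_two_mul (m : ℕ) :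
    convMatrix (wordCount (2 * m)) = (convMatrix commCount : Matrix G G ℝ) ^ m := by
  induction m with
  | zero =>
    ext a b
    simp [convMatrix, wordCount_zero, one_apply, inv_mul_eq_one]
  | succ m ih =>
    rw [pow_succ, ← ih]
    ext a c
    simp only [convMatrix, mul_apply, of_apply, Nat.mul_succ, wordCount_two_mul_add_two,
      Nat.cast_sum, Nat.cast_mul]
    exact Fintype.sum_bijective (a * ·) (Group.mulLeft_bijective a) _ _ fun h => by
      simp [mul_assoc]

lemma wordCount_two_mul_lt_wordCount_one {m : ℕ} (hm : m ≠ 0) {g : G} (hg : g ≠ 1) :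
    wordCount (2 * m) g < wordCount (2 * m) (1 : G) := by
  obtain ⟨k, rfl⟩ := Nat.exists_eq_add_one_of_ne_zero hm
  have hM := posSemidef_convMatrix_commCount (G := G)
  set A : Matrix G G ℝ := convMatrix (wordCount (2 * (k + 1))) with hA_def
  have hA : A.PosSemidef := by
    rw [hA_def, convMatrix_wordCount_two_mul]
    exact hM.pow (k + 1)
  set v : G → ℝ := Pi.single 1 1 - Pi.single g 1
  have hquad : star v ⬝ᵥ A *ᵥ v =
      2 * ((wordCount (2 * (k + 1)) (1 : G) : ℝ) - wordCount (2 * (k + 1)) g) := by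
    rw [star_trivial, single_sub_single_dotProduct_mulVec, ← hA.isHermitian.apply g 1, star_trivial]
    simp only [A, convMatrix, of_apply, inv_one, one_mul, inv_mul_cancel]
    ring
  have hne : star v ⬝ᵥ A *ᵥ v ≠ 0 := by
    intro h0
    have hAv := (hA.dotProduct_mulVec_zero_iff v).1 h0
    rw [hA_def, convMatrix_wordCount_two_mul] at hAv
    have hMv := congrFun (hM.isHermitian.mulVec_eq_zero_of_pow_mulVec_eq_zero hAv) 1
    simp only [v, mulVec_sub, mulVec_single_one, Pi.sub_apply, col_apply, convMatrix, of_apply,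
      inv_one, one_mul, Pi.zero_apply, sub_eq_zero, Nat.cast_inj] at hMv
    exact (commCount_lt_commCount_one hg).ne hMv.symm
  have hpos := hA.dotProduct_mulVec_nonneg v
  rw [hquad] at hpos hne
  have hlt : (wordCount (2 * (k + 1)) g : ℝ) < wordCount (2 * (k + 1)) (1 : G) := by
    linarith [lt_of_le_of_ne hpos hne.symm]
  exact_mod_cast hlt

lemma wordCount_lt_wordCount_one {n : ℕ} (hn : 2 ≤ n) {g : G}
    (hg : g ≠ 1) : wordCount n g < wordCount n (1 : G) := by
  obtain ⟨m, rfl | rfl⟩ := Nat.even_or_odd' n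
  · exact wordCount_two_mul_lt_wordCount_one (by omega) hg
  · rw [wordCount_two_mul_add_one, wordCount_two_mul_add_one]
    exact Nat.mul_lt_mul_of_pos_left (wordCount_two_mul_lt_wordCount_one (by omega) hg)
      Fintype.card_pos

end Positivity

end

theorem prWord_le_prWord_one_general (G : Type*) [Group G] [Fintype G] (n : ℕ) (hn : 2 ≤ n)
    (g : G) :
    prWord G n g ≤ prWord G n 1 ∧ (prWord G n g = prWord G n 1 ↔ g = 1) := by
  classical
  rcases eq_or_ne g 1 with rfl | hg
  · simp
  have hlt : prWord G n g < prWord G n 1 := by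
    rw [prWord_eq_wordCount_div, prWord_eq_wordCount_div]
    gcongr
    exact_mod_cast wordCount_lt_wordCount_one hn hg
  exact ⟨hlt.le, by simp [hlt.ne, hg]⟩

theorem prWord_le_prWord_one (G : Type*) [Group G] [Fintype G] (n : ℕ) (hn : 2 ≤ n)
    (g : G) (hg : g ∈ commutator G) :
    prWord G n g ≤ prWord G n 1 ∧ (prWord G n g = prWord G n 1 ↔ g = 1) :=
  prWord_le_prWord_one_general G n hn g
end

section
/- Let G be a finite non-abelian group, g ∈ G' with g ≠ 1, and n ≥ 2. Then Pr_gⁿ(G) < 1/p, where p is the smallest prime divisor of |G|. In particular, Pr_gⁿ(G) < 1/2. -/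
set_option linter.unusedSectionVars false
set_option maxHeartbeats 1000000
open Finset Subgroup

section Aux

variable {G : Type*} [Group G] [Fintype G]

open scoped Classical

private def wA {n : ℕ} (t : Fin n → G) : G := (List.ofFn t).prod

private def wB {n : ℕ} (t : Fin n → G) : G := (List.ofFn fun i => (t i)⁻¹).prod

private def wW {n : ℕ} (t : Fin n → G) : G := wA t * wB t

private lemma wA_cons {n : ℕ} (x : G) (v : Fin n → G) : wA (Fin.cons x v) = x * wA v := by
  simp [wA, List.ofFn_succ]

private lemma wB_cons {n : ℕ} (x : G) (v : Fin n → G) : wB (Fin.cons x v) = x⁻¹ * wB v := by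
  simp [wB, List.ofFn_succ]

private lemma wW_cons {n : ℕ} (x : G) (v : Fin n → G) :
    wW (Fin.cons x v) = x * wA v * x⁻¹ * wB v := by
  simp [wW, wA_cons, wB_cons, mul_assoc]

/-- split off the first coordinate -/
private def consSplit {n : ℕ} (P : (Fin (n + 1) → G) → Prop) :
    {t : Fin (n + 1) → G // P t} ≃ (v : Fin n → G) × {x : G // P (Fin.cons x v)} where
  toFun t := ⟨Fin.tail t.1, t.1 0, by rw [Fin.cons_self_tail]; exact t.2⟩
  invFun s := ⟨Fin.cons s.2.1 s.1, s.2.2⟩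
  left_inv t := by
    apply Subtype.ext
    exact Fin.cons_self_tail t.1
  right_inv s := by
    obtain ⟨v, x, h⟩ := s
    rfl

private lemma card_cons_split {n : ℕ} (P : (Fin (n + 1) → G) → Prop) :
    Nat.card {t : Fin (n + 1) → G // P t} =
      ∑ v : Fin n → G, Nat.card {x : G // P (Fin.cons x v)} := by
  rw [Nat.card_congr (consSplit P), Nat.card_eq_fintype_card, Fintype.card_sigma]
  exact Finset.sum_congr rfl fun v _ => (Nat.card_eq_fintype_card).symm

/-- noncentral fiber bound -/
private lemma fiber_noncentral {a b g : G} (ha : a ∉ Subgroup.center G)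
    (p : ℕ) (hmin : ∀ q : ℕ, q.Prime → q ∣ Nat.card G → p ≤ q) :
    p * Nat.card {x : G // x * a * x⁻¹ * b = g} ≤ Nat.card G := by
  by_cases hne : Nonempty {x : G // x * a * x⁻¹ * b = g}
  · obtain ⟨x₀, hx₀⟩ := hne
    set H := Subgroup.centralizer ({a} : Set G) with hH
    have hcard : Nat.card {x : G // x * a * x⁻¹ * b = g} ≤ Nat.card H := by
      have hinj : Function.Injective (fun x : {x : G // x * a * x⁻¹ * b = g} =>
          (⟨x₀⁻¹ * x.1, by
            have h1 : x.1 * a * x.1⁻¹ = x₀ * a * x₀⁻¹ := mul_right_cancel (x.2.trans hx₀.symm)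
            rw [Subgroup.mem_centralizer_singleton_iff]
            calc x₀⁻¹ * ↑x * a = x₀⁻¹ * (↑x * a * (↑x)⁻¹) * ↑x := by group
              _ = x₀⁻¹ * (x₀ * a * x₀⁻¹) * ↑x := by rw [h1]
              _ = a * (x₀⁻¹ * ↑x) := by group⟩ : H)) := by
        intro x y hxy
        apply Subtype.ext
        have := congrArg Subtype.val hxy
        exact mul_left_cancel this
      exact Nat.card_le_card_of_injective _ hinj
    have hHne : H ≠ ⊤ := by
      intro h
      apply ha
      rw [Subgroup.mem_center_iff]
      intro y
      have hy : y ∈ H := h ▸ Subgroup.mem_top y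
      exact Subgroup.mem_centralizer_singleton_iff.mp hy
    have hidx1 : H.index ≠ 1 := fun h => hHne (Subgroup.index_eq_one.mp h)
    obtain ⟨q, hq, hqd⟩ := Nat.exists_prime_and_dvd hidx1
    have hpq : p ≤ q := hmin q hq (hqd.trans H.index_dvd_card)
    have hqi : q ≤ H.index :=
      Nat.le_of_dvd (Nat.pos_of_ne_zero H.index_ne_zero_of_finite) hqd
    calc p * Nat.card {x : G // x * a * x⁻¹ * b = g}
        ≤ H.index * Nat.card H := Nat.mul_le_mul (hpq.trans hqi) hcard
      _ = Nat.card G := by rw [mul_comm]; exact H.card_mul_index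
  · rw [not_nonempty_iff] at hne
    rw [Nat.card_of_isEmpty]
    simp

/-- central fiber count -/
private lemma fiber_central {a b g : G} (ha : a ∈ Subgroup.center G) :
    Nat.card {x : G // x * a * x⁻¹ * b = g} = if a * b = g then Nat.card G else 0 := by
  have hcond : ∀ x : G, (x * a * x⁻¹ * b = g) ↔ (a * b = g) := by
    intro x
    have h : x * a = a * x := (Subgroup.mem_center_iff.mp ha) x
    rw [show x * a * x⁻¹ * b = a * b by rw [h]; group]
  split_ifs with h
  · exact Nat.card_congr (Equiv.subtypeUnivEquiv (fun x => (hcond x).mpr h))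
  · haveI : IsEmpty {x : G // x * a * x⁻¹ * b = g} := ⟨fun x => h ((hcond x.1).mp x.2)⟩
    exact Nat.card_of_isEmpty

private lemma card_shift_center (a : G) :
    Nat.card {x : G // x * a ∈ Subgroup.center G} = Nat.card (Subgroup.center G) :=
  Nat.card_congr (Equiv.subtypeEquiv (Equiv.mulRight a) (fun _ => Iff.rfl))

private lemma fiber_central_and {a b g : G} :
    Nat.card {x : G // x * a ∈ Subgroup.center G ∧ x * a * x⁻¹ * b = g} =
      if a * b = g then Nat.card (Subgroup.center G) else 0 := by
  have key : ∀ x : G, x * a ∈ Subgroup.center G → x * a * x⁻¹ = a := by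
    intro x hx
    have h1 : x⁻¹ * (x * a) = (x * a) * x⁻¹ := (Subgroup.mem_center_iff.mp hx) x⁻¹
    calc x * a * x⁻¹ = x⁻¹ * (x * a) := h1.symm
      _ = a := by group
  have hcond : ∀ x : G, (x * a ∈ Subgroup.center G ∧ x * a * x⁻¹ * b = g) ↔
      (x * a ∈ Subgroup.center G ∧ a * b = g) := by
    intro x
    constructor
    · rintro ⟨h1, h2⟩
      exact ⟨h1, by rwa [key x h1] at h2⟩
    · rintro ⟨h1, h2⟩
      exact ⟨h1, by rw [key x h1]; exact h2⟩
  rw [Nat.card_congr (Equiv.subtypeEquivRight hcond)]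
  split_ifs with h
  · rw [Nat.card_congr (Equiv.subtypeEquivRight (fun x => and_iff_left h))]
    exact card_shift_center a
  · haveI : IsEmpty {x : G // x * a ∈ Subgroup.center G ∧ a * b = g} :=
      ⟨fun x => h x.2.2⟩
    exact Nat.card_of_isEmpty

private lemma count_A_center (m : ℕ) :
    Nat.card {v : Fin (m + 1) → G // wA v ∈ Subgroup.center G} =
      Nat.card (Subgroup.center G) * (Nat.card G) ^ m := by
  rw [card_cons_split (fun v => wA v ∈ Subgroup.center G)]
  have h : ∀ u : Fin m → G,
      Nat.card {x : G // wA (Fin.cons x u) ∈ Subgroup.center G} =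
        Nat.card (Subgroup.center G) := by
    intro u
    simp_rw [wA_cons]
    exact card_shift_center (wA u)
  rw [Finset.sum_congr rfl fun u _ => h u, Finset.sum_const, Finset.card_univ, smul_eq_mul,
    mul_comm]
  simp [Nat.card_eq_fintype_card, Fintype.card_fun]

private lemma count_A_center_W (m : ℕ) (g : G) :
    Nat.card {v : Fin (m + 1) → G // wA v ∈ Subgroup.center G ∧ wW v = g} =
      Nat.card (Subgroup.center G) * Nat.card {u : Fin m → G // wW u = g} := by
  rw [card_cons_split (fun v => wA v ∈ Subgroup.center G ∧ wW v = g)]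
  have h : ∀ u : Fin m → G,
      Nat.card {x : G // wA (Fin.cons x u) ∈ Subgroup.center G ∧ wW (Fin.cons x u) = g} =
        if wW u = g then Nat.card (Subgroup.center G) else 0 := by
    intro u
    simp_rw [wA_cons, wW_cons]
    exact fiber_central_and
  rw [Finset.sum_congr rfl fun u _ => h u, ← Finset.sum_filter, Finset.sum_const, smul_eq_mul,
    mul_comm]
  congr 1
  rw [Nat.card_eq_fintype_card, Fintype.card_subtype]

private lemma step_bound (p : ℕ) (hmin : ∀ q : ℕ, q.Prime → q ∣ Nat.card G → p ≤ q)
    (g : G) (n : ℕ) :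
    p * Nat.card {t : Fin (n + 2) → G // wW t = g}
      + Nat.card G * Nat.card {v : Fin (n + 1) → G // wA v ∈ Subgroup.center G}
    ≤ p * Nat.card G * Nat.card {v : Fin (n + 1) → G // wA v ∈ Subgroup.center G ∧ wW v = g}
      + Nat.card G * (Nat.card G) ^ (n + 1) := by
  set cG := Nat.card G with hcG
  have hmain : p * Nat.card {t : Fin (n + 2) → G // wW t = g} ≤
      ∑ v : Fin (n + 1) → G,
        (if wA v ∈ Subgroup.center G then (if wW v = g then p * cG else 0) else cG) := by
    rw [card_cons_split (fun t => wW t = g), Finset.mul_sum]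
    apply Finset.sum_le_sum
    intro v _
    simp_rw [wW_cons]
    by_cases hv : wA v ∈ Subgroup.center G
    · rw [fiber_central hv, if_pos hv]
      have hre : (wA v * wB v = g) = (wW v = g) := rfl
      rw [hre]
      split_ifs <;> simp [hcG, Nat.card_eq_fintype_card]
    · rw [if_neg hv]
      exact fiber_noncentral hv p hmin
  have hsum : ∑ v : Fin (n + 1) → G,
      (if wA v ∈ Subgroup.center G then (if wW v = g then p * cG else 0) else cG)
      = p * cG * Nat.card {v : Fin (n + 1) → G // wA v ∈ Subgroup.center G ∧ wW v = g}
        + cG * ((univ : Finset (Fin (n + 1) → G)).filter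
            (fun v => ¬ (wA v ∈ Subgroup.center G))).card := by
    rw [← Finset.sum_filter_add_sum_filter_not univ (fun v => wA v ∈ Subgroup.center G)]
    congr 1
    · rw [Finset.sum_congr rfl (fun v hv => if_pos (Finset.mem_filter.mp hv).2),
        ← Finset.sum_filter, Finset.filter_filter, Finset.sum_const, smul_eq_mul, mul_comm]
      congr 1
      rw [Nat.card_eq_fintype_card, Fintype.card_subtype]
    · rw [Finset.sum_congr rfl (fun v hv => if_neg (Finset.mem_filter.mp hv).2),
        Finset.sum_const, smul_eq_mul, mul_comm]
  have hK' : Nat.card {v : Fin (n + 1) → G // wA v ∈ Subgroup.center G}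
      = ((univ : Finset (Fin (n + 1) → G)).filter (fun v => wA v ∈ Subgroup.center G)).card := by
    rw [Nat.card_eq_fintype_card, Fintype.card_subtype]
  have htot : ((univ : Finset (Fin (n + 1) → G)).filter (fun v => wA v ∈ Subgroup.center G)).card
      + ((univ : Finset (Fin (n + 1) → G)).filter
          (fun v => ¬ (wA v ∈ Subgroup.center G))).card = cG ^ (n + 1) := by
    rw [Finset.card_filter_add_card_filter_not, Finset.card_univ]
    simp [hcG, Nat.card_eq_fintype_card, Fintype.card_fun]
  have := hmain.trans (le_of_eq hsum)
  -- combine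
  nlinarith [this, htot, hK']

private lemma main_lt (p : ℕ) (hmin : ∀ q : ℕ, q.Prime → q ∣ Nat.card G → p ≤ q)
    (g : G) (hg1 : g ≠ 1) :
    ∀ n : ℕ, p * Nat.card {t : Fin n → G // wW t = g} < (Nat.card G) ^ n := by
  have hG1 : 0 < Nat.card G := Nat.card_pos
  have hZ1 : 0 < Nat.card (Subgroup.center G) := Nat.card_pos
  intro n
  induction n using Nat.strong_induction_on with
  | _ n ih =>
    match n with
    | 0 =>
        haveI : IsEmpty {t : Fin 0 → G // wW t = g} :=
          ⟨fun t => hg1 (t.2.symm.trans (by simp [wW, wA, wB]))⟩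
        rw [Nat.card_of_isEmpty]
        simpa using Nat.one_pos
    | 1 =>
        haveI : IsEmpty {t : Fin 1 → G // wW t = g} :=
          ⟨fun t => hg1 (t.2.symm.trans (by simp [wW, wA, wB]))⟩
        rw [Nat.card_of_isEmpty]
        simpa using hG1
    | (m + 2) =>
        have IH : p * Nat.card {t : Fin m → G // wW t = g} + 1 ≤ (Nat.card G) ^ m :=
          Nat.succ_le_of_lt (ih m (by omega))
        have hstep := step_bound p hmin g m
        rw [count_A_center m, count_A_center_W m g] at hstep
        set N2 := Nat.card {t : Fin (m + 2) → G // wW t = g}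
        set Nm := Nat.card {t : Fin m → G // wW t = g}
        set cG := Nat.card G
        set cZ := Nat.card (Subgroup.center G)
        have h2 : cG * cZ * (p * Nm + 1) ≤ cG * cZ * cG ^ m :=
          Nat.mul_le_mul_left _ IH
        have e1 : p * cG * (cZ * Nm) = cG * cZ * (p * Nm) := by ring
        have e2 : cG * (cZ * cG ^ m) = cG * cZ * cG ^ m := by ring
        have e3 : cG * cG ^ (m + 1) = cG ^ (m + 2) := by ring
        have e4 : cG * cZ * (p * Nm + 1) = cG * cZ * (p * Nm) + cG * cZ := by ring
        have h5 : 1 ≤ cG * cZ := Nat.one_le_iff_ne_zero.mpr (by positivity)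
        linarith

end Aux

theorem prWord_lt_inv_smallest_prime (G : Type*) [Group G] [Fintype G]
    (hG : ¬ (∀ a b : G, a * b = b * a))
    (g : G) (hg : g ∈ commutator G) (hg1 : g ≠ 1) (n : ℕ) (hn : 2 ≤ n)
    (p : ℕ) (hp : p.Prime) (hpdvd : p ∣ Nat.card G)
    (hmin : ∀ q : ℕ, q.Prime → q ∣ Nat.card G → p ≤ q) :
    prWord G n g < 1 / (p : ℚ) ∧ prWord G n g < 1 / 2 := by
  have hkey : p * Nat.card {t : Fin n → G // wW t = g} < (Nat.card G) ^ n :=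
    main_lt p hmin g hg1 n
  have hN : Nat.card {t : Fin n → G //
        (List.ofFn t).prod * (List.ofFn fun i => (t i)⁻¹).prod = g}
      = Nat.card {t : Fin n → G // wW t = g} := rfl
  have hG0 : 0 < ((Nat.card G : ℚ)) := by
    exact_mod_cast (Nat.card_pos : 0 < Nat.card G)
  have hp0 : 0 < (p : ℚ) := by exact_mod_cast hp.pos
  have h1 : prWord G n g < 1 / (p : ℚ) := by
    unfold prWord
    rw [hN, div_lt_div_iff₀ (by positivity) hp0, one_mul]
    have := hkey
    rw [mul_comm] at this
    exact_mod_cast this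
  refine ⟨h1, h1.trans_le ?_⟩
  apply one_div_le_one_div_of_le
  · norm_num
  · exact_mod_cast hp.two_le
end

section
/- Let G be a finite group, g ∈ G, and H, K subgroups of G. Then Pr_g(H,K) = (1/(|H||K|)) Σ_{x ∈ H, g⁻¹x ∈ Cl_K(x)} |C_K(x)|, where C_K(x) = {y ∈ K : xy = yx} and Cl_K(x) = {yxy⁻¹ : y ∈ K}. -/
/-- The probability that a random pair `(x, y) ∈ H × K` satisfies `[x, y] = g`. -/
noncomputable def prComm {G : Type*} [Group G] (H K : Subgroup G) (g : G) : ℚ :=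
  (Nat.card {p : H × K // (p.1 : G) * (p.2 : G) * (p.1 : G)⁻¹ * (p.2 : G)⁻¹ = g} : ℚ) /
    ((Nat.card H : ℚ) * (Nat.card K : ℚ))

theorem prComm_eq_sum_centralizers (G : Type*) [Group G] [Fintype G]
    (H K : Subgroup G) [Fintype H] (g : G) :
    prComm H K g = (1 / ((Nat.card H : ℚ) * (Nat.card K : ℚ))) *
      ∑ x : H, Set.indicator
        {x : H | g⁻¹ * (x : G) ∈ {z : G | ∃ y : K, (y : G) * (x : G) * (y : G)⁻¹ = z}}
        (fun x => (Nat.card {y : K // (x : G) * (y : G) = (y : G) * (x : G)} : ℚ)) x := by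
  classical
  have hcond : ∀ (x : H) (y : K),
      ((x : G) * y * (x : G)⁻¹ * (y : G)⁻¹ = g) ↔ ((y : G) * x * (y : G)⁻¹ = g⁻¹ * x) := by
    intro x y
    constructor
    · intro h; rw [← h]; group
    · intro h
      have h2 : g⁻¹ = (y : G) * x * (y : G)⁻¹ * (x : G)⁻¹ := by rw [h]; group
      rw [← inv_inv g, h2]; group
  have key : ∀ x : H, (Nat.card {y : K // (y : G) * x * (y : G)⁻¹ = g⁻¹ * x} : ℚ)
      = Set.indicator
        {x : H | g⁻¹ * (x : G) ∈ {z : G | ∃ y : K, (y : G) * (x : G) * (y : G)⁻¹ = z}}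
        (fun x => (Nat.card {y : K // (x : G) * (y : G) = (y : G) * (x : G)} : ℚ)) x := by
    intro x
    by_cases hx : ∃ y : K, (y : G) * x * (y : G)⁻¹ = g⁻¹ * x
    · obtain ⟨y₀, hy₀⟩ := hx
      have hmem : x ∈ {x : H | g⁻¹ * (x : G) ∈
          {z : G | ∃ y : K, (y : G) * (x : G) * (y : G)⁻¹ = z}} := ⟨y₀, hy₀⟩
      rw [Set.indicator_of_mem hmem]
      congr 1
      apply Nat.card_congr
      refine Equiv.subtypeEquiv (Equiv.mulLeft y₀⁻¹) fun y => ?_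
      simp only [Equiv.coe_mulLeft]
      push_cast
      rw [← hy₀]
      constructor
      · intro h
        calc (x : G) * ((y₀ : G)⁻¹ * y)
            = (y₀ : G)⁻¹ * ((y₀ : G) * x * (y₀ : G)⁻¹) * y := by group
          _ = (y₀ : G)⁻¹ * ((y : G) * x * (y : G)⁻¹) * y := by rw [h]
          _ = (y₀ : G)⁻¹ * y * x := by group
      · intro h
        calc (y : G) * x * (y : G)⁻¹
            = y₀ * (((y₀ : G)⁻¹ * y) * x * ((y₀ : G)⁻¹ * y)⁻¹) * (y₀ : G)⁻¹ := by group
          _ = y₀ * ((x : G) * ((y₀ : G)⁻¹ * y) * ((y₀ : G)⁻¹ * y)⁻¹) * (y₀ : G)⁻¹ := by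
              rw [h]
          _ = y₀ * x * (y₀ : G)⁻¹ := by group
    · have hnmem : x ∉ {x : H | g⁻¹ * (x : G) ∈
          {z : G | ∃ y : K, (y : G) * (x : G) * (y : G)⁻¹ = z}} := hx
      rw [Set.indicator_of_notMem hnmem]
      norm_cast
      rw [Nat.card_eq_zero]
      left
      rw [isEmpty_subtype]
      exact fun y h => hx ⟨y, h⟩
  have hN : (Nat.card {p : H × K // (p.1 : G) * (p.2 : G) * (p.1 : G)⁻¹ * (p.2 : G)⁻¹ = g} : ℚ)
      = ∑ x : H, (Nat.card {y : K // (y : G) * x * (y : G)⁻¹ = g⁻¹ * x} : ℚ) := by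
    have e1 : {p : H × K // (p.1 : G) * (p.2 : G) * (p.1 : G)⁻¹ * (p.2 : G)⁻¹ = g}
        ≃ Σ x : H, {y : K // (y : G) * x * (y : G)⁻¹ = g⁻¹ * x} :=
      (Equiv.subtypeEquivRight fun (p : H × K) => hcond p.1 p.2).trans
        (Equiv.subtypeProdEquivSigmaSubtype
          (p := fun (x : H) (y : K) => (y : G) * x * (y : G)⁻¹ = g⁻¹ * x))
    rw [Nat.card_congr e1]
    simp only [Nat.card_eq_fintype_card, Fintype.card_sigma]
    push_cast
    rfl
  rw [prComm, hN, div_eq_mul_inv, mul_comm, one_div]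
  congr 1
  exact Finset.sum_congr rfl fun x _ => key x
end

section
/- Let G be a finite group and H, K₁ ⊆ K₂ subgroups of G. Then Pr(H,K₁) ≥ Pr(H,K₂), with equality if and only if Cl_{K₁}(x) = Cl_{K₂}(x) for all x ∈ H. -/
/-- The probability that a random pair `(x, y) ∈ H × K` commutes. -/
noncomputable def prSub {G : Type*} [Group G] (H K : Subgroup G) : ℚ :=
  (Nat.card {p : H × K // (p.1 : G) * (p.2 : G) = (p.2 : G) * (p.1 : G)} : ℚ) /
    ((Nat.card H : ℚ) * (Nat.card K : ℚ))

/-!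
Orbit–stabilizer for the conjugation action of `K` gives
`|{y ∈ K : xy = yx}| = |K| / |Cl_K(x)|`, so counting commuting pairs fibrewise over `x ∈ H` yields
`Pr(H, K) = (1/|H|) ∑_{x ∈ H} 1/|Cl_K(x)|`. Since `Cl_{K₁}(x) ⊆ Cl_{K₂}(x)`, the sums compare
termwise, and equality of the sums forces equality of every term, i.e. of every class.
-/

open Finset

namespace Subgroup

variable {G : Type*} [Group G]

def conjClassIn (K : Subgroup G) (x : G) : Set G :=
  {z | ∃ y ∈ K, y * x * y⁻¹ = z}

theorem conjClassIn_mono {K₁ K₂ : Subgroup G} (hK : K₁ ≤ K₂) (x : G) :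
    K₁.conjClassIn x ⊆ K₂.conjClassIn x := by
  rintro _ ⟨y, hy, rfl⟩
  exact ⟨y, hK hy, rfl⟩

theorem conjClassIn_nonempty (K : Subgroup G) (x : G) : (K.conjClassIn x).Nonempty :=
  ⟨x, 1, K.one_mem, by simp⟩

theorem card_conjClassIn_mul_card_commuting (K : Subgroup G) (x : G) :
    Nat.card (K.conjClassIn x) * Nat.card {y : K // x * y = y * x} = Nat.card K := by
  -- local only: the global instance makes `K` act on `G` by left multiplication
  let _ : MulAction K G :=
    MulAction.compHom G ((ConjAct.toConjAct (G := G)).toMonoidHom.comp K.subtype)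
  have hsmul (y : K) (z : G) : y • z = y * z * (y : G)⁻¹ := rfl
  have horbit : MulAction.orbit K x = K.conjClassIn x := by
    ext z
    simp only [MulAction.mem_orbit_iff, hsmul, conjClassIn, Set.mem_ofPred_eq, Subtype.exists,
      exists_prop]
  have hstab : MulAction.stabilizer K x ≃ {y : K // x * y = y * x} :=
    Equiv.subtypeEquivRight fun y => by
      rw [MulAction.mem_stabilizer_iff, hsmul, mul_inv_eq_iff_eq_mul, eq_comm]
  rw [← horbit, ← Nat.card_congr hstab, ← Nat.card_prod,
    Nat.card_congr (MulAction.orbitProdStabilizerEquivGroup K x)]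

theorem card_commutingPairs_eq_sum (H K : Subgroup G) [Fintype H] [Finite K] :
    Nat.card {p : H × K // (p.1 : G) * p.2 = p.2 * p.1} =
      ∑ x : H, Nat.card {y : K // (x : G) * y = y * x} := by
  rw [Nat.card_congr (Equiv.subtypeProdEquivSigmaSubtype fun (x : H) (y : K) =>
    (x : G) * y = y * x), Nat.card_sigma]

theorem prSub_eq_sum_inv_card_conjClassIn (H K : Subgroup G) [Fintype H] [Finite K] :
    prSub H K = (∑ x : H, (Nat.card (K.conjClassIn x) : ℚ)⁻¹) / Nat.card H := by
  rw [prSub, card_commutingPairs_eq_sum, Nat.cast_sum, sum_div, sum_div]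
  refine sum_congr rfl fun x _ => ?_
  have : Nonempty {y : K // (x : G) * y = y * x} := ⟨⟨1, by simp⟩⟩
  have hcomm : (Nat.card {y : K // (x : G) * y = y * x} : ℚ) ≠ 0 := mod_cast Nat.card_pos.ne'
  rw [← card_conjClassIn_mul_card_commuting K x, Nat.cast_mul]
  field_simp

variable [Finite G] {K₁ K₂ : Subgroup G}

theorem inv_card_conjClassIn_anti (hK : K₁ ≤ K₂) (x : G) :
    (Nat.card (K₂.conjClassIn x) : ℚ)⁻¹ ≤ (Nat.card (K₁.conjClassIn x) : ℚ)⁻¹ := by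
  have := (conjClassIn_nonempty K₁ x).to_subtype
  have hpos : (0 : ℚ) < Nat.card (K₁.conjClassIn x) := mod_cast Nat.card_pos
  exact inv_anti₀ hpos (by exact_mod_cast Nat.card_mono (Set.toFinite _) (conjClassIn_mono hK x))

theorem inv_card_conjClassIn_eq_iff (hK : K₁ ≤ K₂) (x : G) :
    (Nat.card (K₂.conjClassIn x) : ℚ)⁻¹ = (Nat.card (K₁.conjClassIn x) : ℚ)⁻¹ ↔
      K₁.conjClassIn x = K₂.conjClassIn x := by
  rw [inv_inj, Nat.cast_inj, Nat.card_coe_set_eq, Nat.card_coe_set_eq]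
  refine ⟨fun h => Set.eq_of_subset_of_ncard_le (conjClassIn_mono hK x) h.le, fun h => by rw [h]⟩

end Subgroup

open Subgroup in
theorem prSub_antitone (G : Type*) [Group G] [Fintype G]
    (H K₁ K₂ : Subgroup G) (hK : K₁ ≤ K₂) :
    prSub H K₁ ≥ prSub H K₂ ∧
      (prSub H K₁ = prSub H K₂ ↔ ∀ x ∈ H,
        {z : G | ∃ y ∈ K₁, y * x * y⁻¹ = z} = {z : G | ∃ y ∈ K₂, y * x * y⁻¹ = z}) := by
  classical
  have hle : ∀ x ∈ (univ : Finset H), (Nat.card (K₂.conjClassIn x) : ℚ)⁻¹ ≤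
      (Nat.card (K₁.conjClassIn x) : ℚ)⁻¹ :=
    fun x _ => inv_card_conjClassIn_anti hK x
  have hH : (0 : ℚ) < Nat.card H := by exact_mod_cast Nat.card_pos
  simp only [prSub_eq_sum_inv_card_conjClassIn H, ge_iff_le, div_le_div_iff_of_pos_right hH,
    div_left_inj' hH.ne']
  refine ⟨sum_le_sum hle, ?_⟩
  rw [eq_comm, sum_eq_sum_iff_of_le hle]
  simp only [mem_univ, true_imp_iff, Subtype.forall, inv_card_conjClassIn_eq_iff hK]
  rfl
end

section
/- Let G be a finite group and p the smallest prime dividing |G|. If H, K are subgroups of G with [H,K] ≠ {1}, then Pr(H,K) ≤ (2p−1)/p². In particular, Pr(H,K) ≤ 3/4. -/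
open Finset

lemma aux_card {G : Type*} [Group G] [Fintype G]
    (p : ℕ) (hmin : ∀ q : ℕ, q.Prime → q ∣ Nat.card G → p ≤ q)
    (K : Subgroup G) (L : Subgroup K) (hL : L ≠ ⊤) :
    p * Nat.card L ≤ Nat.card K := by
  have hi : L.index * Nat.card L = Nat.card K := Subgroup.index_mul_card L
  have h0 : L.index ≠ 0 := Subgroup.index_ne_zero_of_finite
  have h1 : L.index ≠ 1 := fun h => hL (Subgroup.index_eq_one.mp h)
  have hdvd : L.index ∣ Nat.card G :=
    (Subgroup.index_dvd_card L).trans (Subgroup.card_subgroup_dvd_card K)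
  have hq : p ≤ L.index := by
    have hqp : L.index.minFac.Prime := Nat.minFac_prime h1
    have := hmin _ hqp ((Nat.minFac_dvd _).trans hdvd)
    exact this.trans (Nat.minFac_le (Nat.pos_of_ne_zero h0))
  calc p * Nat.card L ≤ L.index * Nat.card L := Nat.mul_le_mul_right _ hq
  _ = Nat.card K := hi

lemma aux_main (G : Type*) [Group G] [Fintype G]
    (p : ℕ) (hp : p.Prime) (hpdvd : p ∣ Nat.card G)
    (hmin : ∀ q : ℕ, q.Prime → q ∣ Nat.card G → p ≤ q)
    (H K : Subgroup G) (h : ⁅H, K⁆ ≠ ⊥) :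
    p ^ 2 * Nat.card {q : H × K // (q.1 : G) * (q.2 : G) = (q.2 : G) * (q.1 : G)}
      ≤ (2 * p - 1) * (Nat.card H * Nat.card K) := by
  classical
  set c : H → ℕ := fun x => Nat.card {y : K // (x : G) * y = y * x} with hc
  -- total card = sum
  have hsum : Nat.card {q : H × K // (q.1 : G) * (q.2 : G) = (q.2 : G) * (q.1 : G)}
      = ∑ x : H, c x := by
    rw [Nat.card_congr (Equiv.subtypeProdEquivSigmaSubtype
      (fun (a : H) (b : K) => (a : G) * b = b * a))]
    simp [Nat.card_eq_fintype_card, Fintype.card_sigma, c]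
  set D : Subgroup H := (Subgroup.centralizer (K : Set G)).subgroupOf H with hD
  have hDne : D ≠ ⊤ := by
    intro htop
    exact h (Subgroup.commutator_eq_bot_iff_le_centralizer.mpr
      (Subgroup.subgroupOf_eq_top.mp htop))
  -- c x = |K| for x ∈ D
  have hcD : ∀ x : H, x ∈ D → c x = Nat.card K := by
    intro x hx
    have : ∀ y : K, (x : G) * y = y * x := by
      intro y
      have := (Subgroup.mem_subgroupOf.mp hx)
      exact ((Subgroup.mem_centralizer_iff).mp this y y.2).symm
    exact Nat.card_congr (Equiv.subtypeUnivEquiv this)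
  -- p * c x ≤ |K| for x ∉ D
  have hcnD : ∀ x : H, x ∉ D → p * c x ≤ Nat.card K := by
    intro x hx
    set L : Subgroup K := (Subgroup.centralizer {(x : G)}).subgroupOf K with hL
    have hcL : c x = Nat.card L := by
      apply Nat.card_congr (Equiv.subtypeEquivRight _)
      intro y
      simp [L, Subgroup.mem_subgroupOf, Subgroup.mem_centralizer_iff]
    have hLne : L ≠ ⊤ := by
      intro htop
      apply hx
      rw [hD, Subgroup.mem_subgroupOf, Subgroup.mem_centralizer_iff]
      intro g hg
      have : (⟨g, hg⟩ : K) ∈ L := htop ▸ Subgroup.mem_top _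
      have h5 := Subgroup.mem_subgroupOf.mp this
      rw [Subgroup.mem_centralizer_iff] at h5
      exact (h5 _ rfl).symm
    rw [hcL]
    exact aux_card p hmin K L hLne
  -- split the sum
  have hsplit := Finset.sum_filter_add_sum_filter_not (univ : Finset H) (· ∈ D)
      (fun x => p * c x)
  have hd : (univ.filter (· ∈ D)).card = Nat.card D := by
    simp [Nat.card_eq_fintype_card, Fintype.card_subtype]
  have hcard : (univ.filter (· ∈ D)).card + (univ.filter (¬ · ∈ D)).card
      = Nat.card H := by
    rw [Finset.card_filter_add_card_filter_not]
    simp [Nat.card_eq_fintype_card]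
  have h1 : ∑ x ∈ univ.filter (· ∈ D), p * c x
      ≤ (univ.filter (· ∈ D)).card * (p * Nat.card K) := by
    apply Finset.sum_le_card_nsmul
    intro x hx
    rw [hcD x (Finset.mem_filter.mp hx).2]
  have h2 : ∑ x ∈ univ.filter (¬ · ∈ D), p * c x
      ≤ (univ.filter (¬ · ∈ D)).card * Nat.card K := by
    apply Finset.sum_le_card_nsmul
    intro x hx
    exact hcnD x (Finset.mem_filter.mp hx).2
  have hpd : p * Nat.card D ≤ Nat.card H := aux_card p hmin H D hDne
  -- put together
  set d := (univ.filter (· ∈ D)).card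
  set e := (univ.filter (¬ · ∈ D)).card
  have hptot : p * (∑ x : H, c x) ≤ d * (p * Nat.card K) + e * Nat.card K := by
    rw [Finset.mul_sum, ← hsplit]
    exact Nat.add_le_add h1 h2
  have hp2 : 2 ≤ p := hp.two_le
  have hpd' : p * d ≤ d + e := by rw [hcard, hd]; exact hpd
  rw [hsum, ← hcard]
  obtain ⟨q, rfl⟩ := Nat.exists_eq_add_of_le hp2
  calc (2 + q) ^ 2 * ∑ x : H, c x = (2 + q) * ((2 + q) * ∑ x : H, c x) := by ring
  _ ≤ (2 + q) * (d * ((2 + q) * Nat.card K) + e * Nat.card K) :=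
      Nat.mul_le_mul_left _ hptot
  _ ≤ (2 * (2 + q) - 1) * ((d + e) * Nat.card K) := by
      have h3 : 2 * (2 + q) - 1 = 3 + 2 * q := by omega
      rw [h3]
      nlinarith [Nat.mul_le_mul_left (q + 1) hpd']

theorem prSub_le_of_commutator_ne_bot (G : Type*) [Group G] [Fintype G]
    (p : ℕ) (hp : p.Prime) (hpdvd : p ∣ Nat.card G)
    (hmin : ∀ q : ℕ, q.Prime → q ∣ Nat.card G → p ≤ q)
    (H K : Subgroup G) (h : ⁅H, K⁆ ≠ ⊥) :
    prSub H K ≤ (2 * (p : ℚ) - 1) / (p : ℚ) ^ 2 ∧ prSub H K ≤ 3 / 4 := by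
  have key := aux_main G p hp hpdvd hmin H K h
  have hp2 : 2 ≤ p := hp.two_le
  have hpq : (2 : ℚ) ≤ (p : ℚ) := by exact_mod_cast hp2
  have hH : (0 : ℚ) < Nat.card H := by exact_mod_cast Nat.card_pos
  have hK : (0 : ℚ) < Nat.card K := by exact_mod_cast Nat.card_pos
  have hkey : (Nat.card {q : H × K // (q.1 : G) * (q.2 : G) = (q.2 : G) * (q.1 : G)} : ℚ)
      * (p : ℚ) ^ 2 ≤ (2 * (p : ℚ) - 1) * (Nat.card H * Nat.card K) := by
    have := (Nat.cast_le (α := ℚ)).mpr key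
    push_cast [Nat.cast_sub (by omega : 1 ≤ 2 * p)] at this
    linarith
  have h1 : prSub H K ≤ (2 * (p : ℚ) - 1) / (p : ℚ) ^ 2 := by
    rw [prSub, div_le_div_iff₀ (by positivity) (by positivity)]
    exact hkey
  refine ⟨h1, h1.trans ?_⟩
  rw [div_le_div_iff₀ (by positivity) (by norm_num)]
  nlinarith
end
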